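/- arXiv:1706.03678 — 3 statements merged into one kernel-verified Lean document; each statement's English description precedes it below -/
import Mathlib

section
/- Let X_1, …, X_n ∈ S, Y_1, …, Y_n ∈ ℝ, let g : S → ℝ, and let A be a set of real-valued functions on S. Suppose f̂ ∈ A satisfies (1/n)Σ_{i=1}^n (f̂(X_i) − Y_i)² ≤ (1/n)Σ_{i=1}^n (f(X_i) − Y_i)² for all f ∈ A. Then for every f ∈ A, (1/n)Σ_{i=1}^n (f̂(X_i) − f(X_i))² ≤ (4/n)Σ_{i=1}^n (Y_i − g(X_i))(f̂(X_i) − f(X_i)) + (4/n)Σ_{i=1}^n (f(X_i) − g(X_i))². -/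
open scoped BigOperators

theorem sq_sub_le_excess_add {R : Type*} [CommRing R] [LinearOrder R] [IsStrictOrderedRing R]
    (a b y c : R) :
    (a - b) ^ 2 ≤ 2 * ((a - y) ^ 2 - (b - y) ^ 2) + 4 * ((y - c) * (a - b)) + 4 * (b - c) ^ 2 := by
  have key : 2 * ((a - y) ^ 2 - (b - y) ^ 2) + 4 * ((y - c) * (a - b)) + 4 * (b - c) ^ 2
      - (a - b) ^ 2 = (a - b + 2 * (b - c)) ^ 2 := by ring
  exact sub_nonneg.mp (key ▸ sq_nonneg _)

theorem Finset.sum_sq_sub_le_excess_add {ι R : Type*} [CommRing R] [LinearOrder R]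
    [IsStrictOrderedRing R] (s : Finset ι) (a b y c : ι → R) :
    ∑ i ∈ s, (a i - b i) ^ 2 ≤
      2 * (∑ i ∈ s, (a i - y i) ^ 2 - ∑ i ∈ s, (b i - y i) ^ 2) +
        4 * ∑ i ∈ s, (y i - c i) * (a i - b i) + 4 * ∑ i ∈ s, (b i - c i) ^ 2 := by
  simp only [Finset.mul_sum, ← Finset.sum_sub_distrib, ← Finset.sum_add_distrib]
  exact Finset.sum_le_sum fun i _ => sq_sub_le_excess_add (a i) (b i) (y i) (c i)

theorem ivanov_basic_inequality_general {S : Type*} (n : ℕ)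
    (X : Fin n → S) (Y : Fin n → ℝ) (g : S → ℝ)
    (A : Set (S → ℝ)) (fhat : S → ℝ)
    (hmin : ∀ f ∈ A, (1 / n : ℝ) * ∑ i, (fhat (X i) - Y i)^2 ≤
      (1 / n : ℝ) * ∑ i, (f (X i) - Y i)^2)
    (f : S → ℝ) (hf : f ∈ A) :
    (1 / n : ℝ) * ∑ i, (fhat (X i) - f (X i))^2 ≤
      (4 / n : ℝ) * ∑ i, (Y i - g (X i)) * (fhat (X i) - f (X i)) +
      (4 / n : ℝ) * ∑ i, (f (X i) - g (X i))^2 := by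
  have hexcess := mul_le_mul_of_nonneg_left
    (Finset.univ.sum_sq_sub_le_excess_add (fhat ∘ X) (f ∘ X) Y (g ∘ X))
    (by positivity : (0 : ℝ) ≤ 1 / n)
  simp only [Function.comp_apply] at hexcess
  have hfit := hmin f hf
  rw [div_eq_mul_one_div 4]
  linarith

theorem ivanov_basic_inequality {S : Type*} (n : ℕ) (hn : 0 < n)
    (X : Fin n → S) (Y : Fin n → ℝ) (g : S → ℝ)
    (A : Set (S → ℝ)) (fhat : S → ℝ) (hfhatA : fhat ∈ A)
    (hmin : ∀ f ∈ A, (1 / n : ℝ) * ∑ i, (fhat (X i) - Y i)^2 ≤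
      (1 / n : ℝ) * ∑ i, (f (X i) - Y i)^2)
    (f : S → ℝ) (hf : f ∈ A) :
    (1 / n : ℝ) * ∑ i, (fhat (X i) - f (X i))^2 ≤
      (4 / n : ℝ) * ∑ i, (Y i - g (X i)) * (fhat (X i) - f (X i)) +
      (4 / n : ℝ) * ∑ i, (f (X i) - g (X i))^2 :=
  ivanov_basic_inequality_general n X Y g A fhat hmin f hf
end

section
/- Let ε_1, …, ε_n be real random variables on (Ω, ℱ, ℙ) such that, writing X = (X_1, …, X_n), E(ε_i | X) = 0 almost surely, Var(ε_i | X) ≤ σ² almost surely for 1 ≤ i ≤ n, and Cov(ε_i, ε_j | X) = 0 almost surely for i ≠ j. Then E( sup_{f ∈ rB_H} | (1/n) Σ_{i=1}^n ε_i f(X_i) | ) ≤ ‖k‖_∞ σ r / n^{1/2} for every r > 0. -/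
open MeasureTheory ProbabilityTheory Real
open scoped BigOperators

noncomputable def ev {S H : Type*} [NormedAddCommGroup H] [InnerProductSpace ℝ H]
    (Φ : S → H) (f : H) (x : S) : ℝ := inner ℝ f (Φ x)

/-!
With `W = ∑ i, ε i • Φ (X i)`, the reproducing property gives
`(1/n) ∑ i, ε i f(X i) = ⟪f, W⟫ / n`, so the supremum over `rB_H` is at most `r ‖W‖ / n`.
By Jensen, `E ‖W‖ ≤ (E ‖W‖²)^{1/2}`, and `‖W‖² = ∑ i j, k(X i, X j) ε i ε j`. The kernel
factors are `X`-measurable and bounded by `‖k‖²_∞`, so they pull out of the conditional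
expectation given `X`: the off-diagonal terms vanish and each diagonal term is at most
`‖k‖²_∞ σ²`, whence `E ‖W‖² ≤ n ‖k‖²_∞ σ²`.
-/

section CondExp

variable {Ω : Type*} {m mΩ : MeasurableSpace Ω} {μ : Measure Ω} {g e : Ω → ℝ} {C : ℝ}

theorem integral_mul_eq_integral_mul_condExp [IsFiniteMeasure μ] (hm : m ≤ mΩ)
    (hg : StronglyMeasurable[m] g) (hgC : ∀ ω, ‖g ω‖ ≤ C) (he : Integrable e μ) :
    ∫ ω, g ω * e ω ∂μ = ∫ ω, g ω * μ[e|m] ω ∂μ := by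
  have : SigmaFinite (μ.trim hm) := (isFiniteMeasure_trim hm).toSigmaFinite
  have hge : Integrable (g * e) μ :=
    he.bdd_mul (hg.mono hm).aestronglyMeasurable (.of_forall hgC)
  calc ∫ ω, g ω * e ω ∂μ = ∫ ω, μ[g * e|m] ω ∂μ := (integral_condExp hm).symm
    _ = ∫ ω, g ω * μ[e|m] ω ∂μ :=
      integral_congr_ae (condExp_mul_of_stronglyMeasurable_left hg hge he)

theorem integral_mul_eq_zero_of_condExp_eq_zero [IsFiniteMeasure μ] (hm : m ≤ mΩ)
    (hg : StronglyMeasurable[m] g) (hgC : ∀ ω, ‖g ω‖ ≤ C) (he : Integrable e μ)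
    (hce : μ[e|m] =ᵐ[μ] 0) :
    ∫ ω, g ω * e ω ∂μ = 0 := by
  rw [integral_mul_eq_integral_mul_condExp hm hg hgC he]
  exact integral_eq_zero_of_ae (hce.mono fun ω hω => by simp [hω])

theorem integral_mul_le_of_condExp_le [IsProbabilityMeasure μ] (hm : m ≤ mΩ)
    (hg : StronglyMeasurable[m] g) (hg0 : ∀ ω, 0 ≤ g ω) (hgC : ∀ ω, g ω ≤ C)
    (he0 : 0 ≤ᵐ[μ] e) (he : Integrable e μ) {c : ℝ} (hce : ∀ᵐ ω ∂μ, μ[e|m] ω ≤ c) :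
    ∫ ω, g ω * e ω ∂μ ≤ C * c := by
  have hgC' : ∀ ω, ‖g ω‖ ≤ C := fun ω => by rw [norm_of_nonneg (hg0 ω)]; exact hgC ω
  rw [integral_mul_eq_integral_mul_condExp hm hg hgC' he]
  calc ∫ ω, g ω * μ[e|m] ω ∂μ ≤ ∫ _, C * c ∂μ := by
        refine integral_mono_ae (integrable_condExp.bdd_mul
          (hg.mono hm).aestronglyMeasurable (.of_forall hgC')) (integrable_const _) ?_
        filter_upwards [condExp_nonneg he0, hce] with ω hce0 hcec
        exact mul_le_mul (hgC ω) hcec hce0 ((hg0 ω).trans (hgC ω))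
    _ = C * c := by simp

end CondExp

theorem norm_sum_smul_sq {H ι : Type*} [NormedAddCommGroup H] [InnerProductSpace ℝ H]
    (s : Finset ι) (c : ι → ℝ) (v : ι → H) :
    ‖∑ i ∈ s, c i • v i‖ ^ 2 = ∑ i ∈ s, ∑ j ∈ s, inner ℝ (v i) (v j) * (c i * c j) := by
  rw [← real_inner_self_eq_norm_sq, sum_inner]
  simp_rw [inner_sum, real_inner_smul_left, real_inner_smul_right]
  exact Finset.sum_congr rfl fun i _ => Finset.sum_congr rfl fun j _ => by ring

theorem memLp_two_norm_of_integrable_norm_sq {Ω E : Type*} {mΩ : MeasurableSpace Ω}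
    {μ : Measure Ω} [NormedAddCommGroup E] {f : Ω → E}
    (hf : Integrable (fun ω => ‖f ω‖ ^ 2) μ) : MemLp (fun ω => ‖f ω‖) 2 μ := by
  have hsqrt : (fun ω => ‖f ω‖) = fun ω => √(‖f ω‖ ^ 2) :=
    funext fun ω => (sqrt_sq (norm_nonneg _)).symm
  refine (memLp_two_iff_integrable_sq ?_).2 hf
  rw [hsqrt]
  exact hf.aemeasurable.sqrt.aestronglyMeasurable

theorem integral_le_sqrt_integral_sq {Ω : Type*} {mΩ : MeasurableSpace Ω} {μ : Measure Ω}
    [IsProbabilityMeasure μ] {f : Ω → ℝ} (hf : MemLp f 2 μ) :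
    ∫ ω, f ω ∂μ ≤ √(∫ ω, f ω ^ 2 ∂μ) := by
  have hvar := variance_nonneg f μ
  rw [variance_eq_sub hf] at hvar
  exact (le_abs_self _).trans (abs_le_sqrt (by simpa using hvar))

section SecondMoment

variable {Ω H ι : Type*} {m mΩ : MeasurableSpace Ω} {μ : Measure Ω}
  [NormedAddCommGroup H] [InnerProductSpace ℝ H]
  {v : ι → Ω → H} {κ : ℝ} {ε : ι → Ω → ℝ}

theorem norm_inner_le_sq_of_norm_le (hv : ∀ i ω, ‖v i ω‖ ≤ κ) (i j : ι) (ω : Ω) :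
    ‖inner ℝ (v i ω) (v j ω)‖ ≤ κ ^ 2 :=
  (norm_inner_le_norm _ _).trans <| by
    rw [sq]; exact mul_le_mul (hv i ω) (hv j ω) (norm_nonneg _) ((norm_nonneg _).trans (hv i ω))

theorem integrable_inner_mul (hm : m ≤ mΩ) (hv : ∀ i ω, ‖v i ω‖ ≤ κ)
    (hvm : ∀ i j, StronglyMeasurable[m] fun ω => inner ℝ (v i ω) (v j ω))
    (hε : ∀ i j, Integrable (fun ω => ε i ω * ε j ω) μ) (i j : ι) :
    Integrable (fun ω => inner ℝ (v i ω) (v j ω) * (ε i ω * ε j ω)) μ :=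
  (hε i j).bdd_mul ((hvm i j).mono hm).aestronglyMeasurable
    (.of_forall (norm_inner_le_sq_of_norm_le hv i j))

variable [Fintype ι]

theorem integrable_norm_sum_smul_sq (hm : m ≤ mΩ) (hv : ∀ i ω, ‖v i ω‖ ≤ κ)
    (hvm : ∀ i j, StronglyMeasurable[m] fun ω => inner ℝ (v i ω) (v j ω))
    (hε : ∀ i j, Integrable (fun ω => ε i ω * ε j ω) μ) :
    Integrable (fun ω => ‖∑ i, ε i ω • v i ω‖ ^ 2) μ := by
  simp_rw [norm_sum_smul_sq]
  exact integrable_finsetSum _ fun i _ => integrable_finsetSum _ fun j _ =>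
    integrable_inner_mul hm hv hvm hε i j

variable [IsProbabilityMeasure μ] {σ : ℝ}

theorem integral_norm_sum_smul_sq_le (hm : m ≤ mΩ) (hv : ∀ i ω, ‖v i ω‖ ≤ κ)
    (hvm : ∀ i j, StronglyMeasurable[m] fun ω => inner ℝ (v i ω) (v j ω))
    (hε : ∀ i j, Integrable (fun ω => ε i ω * ε j ω) μ)
    (hvar : ∀ i, ∀ᵐ ω ∂μ, μ[fun ω' => ε i ω' ^ 2 | m] ω ≤ σ ^ 2)
    (hcov : ∀ i j, i ≠ j → μ[fun ω' => ε i ω' * ε j ω' | m] =ᵐ[μ] 0) :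
    ∫ ω, ‖∑ i, ε i ω • v i ω‖ ^ 2 ∂μ ≤ Fintype.card ι * (κ * σ) ^ 2 := by
  have hdiag : ∀ i, ∫ ω, inner ℝ (v i ω) (v i ω) * (ε i ω * ε i ω) ∂μ ≤ (κ * σ) ^ 2 := by
    intro i
    simp_rw [← sq, mul_pow]
    refine integral_mul_le_of_condExp_le hm (hvm i i) (fun ω => real_inner_self_nonneg)
      (fun ω => (le_abs_self _).trans (norm_inner_le_sq_of_norm_le hv i i ω))
      (.of_forall fun ω => sq_nonneg _) ?_ (hvar i)
    simpa [sq] using hε i i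
  have hoff : ∀ i j, j ≠ i → ∫ ω, inner ℝ (v i ω) (v j ω) * (ε i ω * ε j ω) ∂μ = 0 :=
    fun i j hji => integral_mul_eq_zero_of_condExp_eq_zero hm (hvm i j)
      (norm_inner_le_sq_of_norm_le hv i j) (hε i j) (hcov i j hji.symm)
  simp_rw [norm_sum_smul_sq]
  rw [integral_finsetSum _ fun i _ => integrable_finsetSum _ fun j _ =>
    integrable_inner_mul hm hv hvm hε i j]
  calc ∑ i, ∫ ω, ∑ j, inner ℝ (v i ω) (v j ω) * (ε i ω * ε j ω) ∂μ
      = ∑ i, ∫ ω, inner ℝ (v i ω) (v i ω) * (ε i ω * ε i ω) ∂μ := by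
        refine Finset.sum_congr rfl fun i _ => ?_
        rw [integral_finsetSum _ fun j _ => integrable_inner_mul hm hv hvm hε i j,
          Finset.sum_eq_single i (fun j _ hji => hoff i j hji) (by simp)]
    _ ≤ ∑ _i : ι, (κ * σ) ^ 2 := Finset.sum_le_sum fun i _ => hdiag i
    _ = Fintype.card ι * (κ * σ) ^ 2 := by simp

theorem integral_norm_sum_smul_le (hm : m ≤ mΩ) (hv : ∀ i ω, ‖v i ω‖ ≤ κ)
    (hvm : ∀ i j, StronglyMeasurable[m] fun ω => inner ℝ (v i ω) (v j ω))
    (hε : ∀ i j, Integrable (fun ω => ε i ω * ε j ω) μ)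
    (hvar : ∀ i, ∀ᵐ ω ∂μ, μ[fun ω' => ε i ω' ^ 2 | m] ω ≤ σ ^ 2)
    (hcov : ∀ i j, i ≠ j → μ[fun ω' => ε i ω' * ε j ω' | m] =ᵐ[μ] 0) :
    ∫ ω, ‖∑ i, ε i ω • v i ω‖ ∂μ ≤ √(Fintype.card ι * (κ * σ) ^ 2) :=
  (integral_le_sqrt_integral_sq (memLp_two_norm_of_integrable_norm_sq
    (integrable_norm_sum_smul_sq hm hv hvm hε))).trans
    (sqrt_le_sqrt (integral_norm_sum_smul_sq_le hm hv hvm hε hvar hcov))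

end SecondMoment

theorem sum_mul_ev_eq_inner {S H ι : Type*} [NormedAddCommGroup H] [InnerProductSpace ℝ H]
    (s : Finset ι) (Φ : S → H) (c : ι → ℝ) (x : ι → S) (f : H) :
    ∑ i ∈ s, c i * ev Φ f (x i) = inner ℝ f (∑ i ∈ s, c i • Φ (x i)) := by
  simp [ev, inner_sum, real_inner_smul_right]

theorem abs_inner_le_of_mem_closedBall {H : Type*} [NormedAddCommGroup H]
    [InnerProductSpace ℝ H] {r : ℝ} (f : Metric.closedBall (0 : H) r) (v : H) :
    |inner ℝ (f : H) v| ≤ r * ‖v‖ :=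
  (abs_real_inner_le_norm _ _).trans
    (mul_le_mul_of_nonneg_right (mem_closedBall_zero_iff.1 f.2) (norm_nonneg _))

theorem stronglyMeasurable_comap_pi_comp_prodMk {ι Ω S : Type*} [MeasurableSpace S]
    {X : ι → Ω → S} {k : S × S → ℝ} (hk : Measurable k) (i j : ι) :
    StronglyMeasurable[MeasurableSpace.comap (fun ω j => X j ω) inferInstance]
      fun ω => k (X i ω, X j ω) :=
  have hX : ∀ i, Measurable[MeasurableSpace.comap (fun ω j => X j ω) inferInstance] (X i) :=
    fun i => (measurable_pi_apply i).comp (comap_measurable fun ω j => X j ω)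
  (hk.comp ((hX i).prodMk (hX j))).stronglyMeasurable

theorem empirical_process_ball_bound_general
    (Ω : Type*) [MeasurableSpace Ω] (μ : Measure Ω) [IsProbabilityMeasure μ]
    (S : Type*) [MeasurableSpace S]
    (H : Type*) [NormedAddCommGroup H] [InnerProductSpace ℝ H]
    (Φ : S → H) (κ : ℝ) (hκ0 : 0 ≤ κ) (hκ : ∀ x, ‖Φ x‖ ≤ κ)
    (hkmeas : Measurable fun p : S × S => (inner ℝ (Φ p.1) (Φ p.2) : ℝ))
    (n : ℕ)
    (X : Fin n → Ω → S) (hXm : ∀ i, Measurable (X i))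
    (ε : Fin n → Ω → ℝ)
    (hεintc : ∀ i j, Integrable (fun ω => ε i ω * ε j ω) μ)
    (σ : ℝ) (hσ : 0 ≤ σ)
    (hcondvar : ∀ i, ∀ᵐ ω ∂μ,
      (μ[fun ω' => (ε i ω')^2 | MeasurableSpace.comap (fun ω (j : Fin n) => X j ω) inferInstance]) ω ≤ σ^2)
    (hcondcov : ∀ i j, i ≠ j →
      μ[fun ω' => ε i ω' * ε j ω' | MeasurableSpace.comap (fun ω (j : Fin n) => X j ω) inferInstance] =ᵐ[μ] 0)
    (r : ℝ) (hr : 0 < r) :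
    ∫ ω, (⨆ f : Metric.closedBall (0 : H) r, |(1 / n : ℝ) * ∑ i, ε i ω * ev Φ (f : H) (X i ω)|) ∂μ ≤
      κ * σ * r / Real.sqrt (n : ℝ) := by
  have hm := (measurable_pi_lambda _ hXm).comap_le
  have hkm := stronglyMeasurable_comap_pi_comp_prodMk (X := X) hkmeas
  have hv : ∀ i ω, ‖Φ (X i ω)‖ ≤ κ := fun _ _ => hκ _
  set W : Ω → H := fun ω => ∑ i, ε i ω • Φ (X i ω)
  have hWint : Integrable (fun ω => ‖W ω‖) μ :=
    (memLp_two_norm_of_integrable_norm_sq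
      (integrable_norm_sum_smul_sq (ε := ε) hm hv hkm hεintc)).integrable one_le_two
  have hsup : ∀ ω, (⨆ f : Metric.closedBall (0 : H) r,
      |(1 / n : ℝ) * ∑ i, ε i ω * ev Φ (f : H) (X i ω)|) ≤ r / n * ‖W ω‖ := by
    refine fun ω => Real.iSup_le (fun f => ?_) (by positivity)
    rw [sum_mul_ev_eq_inner, abs_mul, abs_of_nonneg (by positivity), one_div_mul_eq_div,
      div_mul_eq_mul_div]
    gcongr
    exact abs_inner_le_of_mem_closedBall f _
  calc _ ≤ ∫ ω, r / n * ‖W ω‖ ∂μ :=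
        integral_mono_of_nonneg (.of_forall fun ω => Real.iSup_nonneg fun _ => abs_nonneg _)
          (hWint.const_mul _) (.of_forall hsup)
    _ = r / n * ∫ ω, ‖W ω‖ ∂μ := integral_const_mul _ _
    _ ≤ r / n * √(Fintype.card (Fin n) * (κ * σ) ^ 2) := by
        gcongr
        exact integral_norm_sum_smul_le hm hv hkm hεintc hcondvar hcondcov
    _ = κ * σ * r / √n := by
        rw [Fintype.card_fin, sqrt_mul (Nat.cast_nonneg _), sqrt_sq (by positivity),
          div_eq_mul_one_div (κ * σ * r), ← sqrt_div_self']
        ring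

theorem empirical_process_ball_bound
    (Ω : Type*) [MeasurableSpace Ω] (μ : Measure Ω) [IsProbabilityMeasure μ]
    (S : Type*) [MeasurableSpace S] (P : Measure S) [IsProbabilityMeasure P]
    (H : Type*) [NormedAddCommGroup H] [InnerProductSpace ℝ H]
    [SecondCountableTopology H] [MeasurableSpace H] [BorelSpace H]
    (Φ : S → H) (κ : ℝ) (hκ0 : 0 ≤ κ) (hκ : ∀ x, ‖Φ x‖ ≤ κ)
    (hkmeas : Measurable fun p : S × S => (inner ℝ (Φ p.1) (Φ p.2) : ℝ))
    (n : ℕ) (hn : 0 < n)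
    (X : Fin n → Ω → S) (hXm : ∀ i, Measurable (X i))
    (hiid : iIndepFun X μ)
    (hPX : ∀ i, Measure.map (X i) μ = P)
    (ε : Fin n → Ω → ℝ) (hεm : ∀ i, Measurable (ε i))
    (hεint1 : ∀ i, Integrable (ε i) μ)
    (hεint2 : ∀ i, Integrable (fun ω => (ε i ω)^2) μ)
    (hεintc : ∀ i j, Integrable (fun ω => ε i ω * ε j ω) μ)
    (σ : ℝ) (hσ : 0 ≤ σ)
    (hcond0 : ∀ i, μ[ε i | MeasurableSpace.comap (fun ω (j : Fin n) => X j ω) inferInstance] =ᵐ[μ] 0)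
    (hcondvar : ∀ i, ∀ᵐ ω ∂μ,
      (μ[fun ω' => (ε i ω')^2 | MeasurableSpace.comap (fun ω (j : Fin n) => X j ω) inferInstance]) ω ≤ σ^2)
    (hcondcov : ∀ i j, i ≠ j →
      μ[fun ω' => ε i ω' * ε j ω' | MeasurableSpace.comap (fun ω (j : Fin n) => X j ω) inferInstance] =ᵐ[μ] 0)
    (r : ℝ) (hr : 0 < r) :
    ∫ ω, (⨆ f : Metric.closedBall (0 : H) r, |(1 / n : ℝ) * ∑ i, ε i ω * ev Φ (f : H) (X i ω)|) ∂μ ≤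
      κ * σ * r / Real.sqrt (n : ℝ) :=
  empirical_process_ball_bound_general Ω μ S H Φ κ hκ0 hκ hkmeas n X hXm ε hεintc σ hσ hcondvar
    hcondcov r hr
end

section
/- Let X_1, …, X_n be i.i.d. S-valued random variables with distribution P, let D > 0 and let A be a separable set of bounded measurable real-valued functions on S with ‖f‖_∞ ≤ D for all f ∈ A. Let Z = sup_{f ∈ A} | ‖f‖²_{L²(P_n)} − ‖f‖²_{L²(P)} |. Then for every t > 0, with probability at least 1 − e^{−t}, Z ≤ E(Z) + ( 2D⁴ t / n + 4D² E(Z) t / n )^{1/2} + 2D² t / (3n). -/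
open MeasureTheory ProbabilityTheory Real
open scoped BigOperators

/-!
`Z` is a function of the sample with bounded differences: since `f ^ 2` takes values in
`[0, D ^ 2]`, replacing one `X i` moves every `|P_n f² - P f²|`, hence their supremum, by at most
`D ^ 2 / n`. McDiarmid's inequality then gives `P(Z ≥ E Z + ε) ≤ exp (-2 n ε² / D ^ 4)`, and the
deviation in the statement is at least `√(2 D ^ 4 t / n)`, which makes this at most `exp (-t)`.
McDiarmid's inequality is proved by induction on `n`, integrating out one coordinate at a time
with Hoeffding's lemma. Separability replaces the supremum over `A` by a countable one, so `Z` is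
measurable.
-/

section McDiarmid

variable {S : Type*} [MeasurableSpace S]

lemma piFinSuccAbove_zero_symm_apply {n : ℕ} (p : S × (Fin n → S)) :
    (MeasurableEquiv.piFinSuccAbove (fun _ : Fin (n + 1) => S) 0).symm p = Fin.cons p.1 p.2 := by
  simp [MeasurableEquiv.piFinSuccAbove_symm_apply, Fin.consEquiv]

lemma measurable_fin_cons {n : ℕ} :
    Measurable fun p : S × (Fin n → S) => (Fin.cons p.1 p.2 : Fin (n + 1) → S) := by
  have h := (MeasurableEquiv.piFinSuccAbove (fun _ : Fin (n + 1) => S) 0).symm.measurable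
  rwa [funext piFinSuccAbove_zero_symm_apply] at h

lemma integral_pi_fin_succ {n : ℕ} (P : Fin (n + 1) → Measure S) [∀ i, SigmaFinite (P i)]
    {F : (Fin (n + 1) → S) → ℝ} (hF : Integrable F (Measure.pi P)) :
    ∫ x, F x ∂Measure.pi P = ∫ z, ∫ y, F (Fin.cons y z) ∂P 0 ∂Measure.pi fun i => P i.succ := by
  have h := (measurePreserving_piFinSuccAbove P 0).symm
  rw [← h.integral_comp', integral_prod_symm]
  · simp only [piFinSuccAbove_zero_symm_apply, Fin.zero_succAbove]
  · exact (h.integrable_comp_emb (MeasurableEquiv.measurableEmbedding _)).2 hF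

lemma integrable_exp_mul_of_abs_le {Ω : Type*} [MeasurableSpace Ω] {μ : Measure Ω}
    [IsFiniteMeasure μ] {X : Ω → ℝ} (hX : AEMeasurable X μ) {B : ℝ} (hXB : ∀ ω, |X ω| ≤ B)
    (t : ℝ) : Integrable (fun ω => exp (t * X ω)) μ :=
  integrable_exp_mul_of_mem_Icc hX (ae_of_all _ fun ω => abs_le.mp (hXB ω))

lemma mgf_sub_integral_le_of_abs_sub_le {Q : Measure S} [IsProbabilityMeasure Q] {G : S → ℝ}
    (hG : Measurable G) {c : ℝ} (hGc : ∀ y y', |G y - G y'| ≤ c) (t : ℝ) :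
    mgf (fun y => G y - ∫ y', G y' ∂Q) Q t ≤ exp (c ^ 2 * t ^ 2 / 8) := by
  obtain ⟨y₀⟩ := nonempty_of_isProbabilityMeasure Q
  have : Nonempty S := ⟨y₀⟩
  have hc : 0 ≤ c := (abs_nonneg _).trans (hGc y₀ y₀)
  have hbdd : BddBelow (Set.range G) :=
    ⟨G y₀ - c, by rintro _ ⟨y, rfl⟩; linarith [(abs_le.mp (hGc y₀ y)).2]⟩
  have hmem : ∀ y, G y ∈ Set.Icc (⨅ y', G y') ((⨅ y', G y') + c) := fun y =>
    ⟨ciInf_le hbdd y, by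
      linarith [le_ciInf fun y' => show G y - c ≤ G y' by linarith [(abs_le.mp (hGc y y')).2]]⟩
  refine ((hasSubgaussianMGF_of_mem_Icc hG.aemeasurable (ae_of_all _ hmem)).mgf_le t).trans_eq ?_
  congr 1
  simp only [add_sub_cancel_left, NNReal.coe_pow, NNReal.coe_div, coe_nnnorm, Real.norm_eq_abs,
    abs_of_nonneg hc, NNReal.coe_ofNat]
  ring

lemma integral_exp_mul_sub_le_of_abs_sub_le {Q : Measure S} [IsProbabilityMeasure Q]
    {G : S → ℝ} (hG : Measurable G) {c : ℝ} (hGc : ∀ y y', |G y - G y'| ≤ c) (t m : ℝ) :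
    ∫ y, exp (t * (G y - m)) ∂Q ≤ exp (t * (∫ y, G y ∂Q - m)) * exp (c ^ 2 * t ^ 2 / 8) :=
  calc ∫ y, exp (t * (G y - m)) ∂Q
      = exp (t * (∫ y, G y ∂Q - m)) * mgf (fun y => G y - ∫ y', G y' ∂Q) Q t := by
        rw [mgf, ← integral_const_mul]
        congr 1 with y
        rw [← exp_add]
        ring_nf
    _ ≤ _ := by gcongr; exact mgf_sub_integral_le_of_abs_sub_le hG hGc t

lemma abs_integral_fin_cons_sub_update_le {n : ℕ} {Q : Measure S} [IsProbabilityMeasure Q]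
    {F : (Fin (n + 1) → S) → ℝ} (hF : Measurable F) {B : ℝ} (hFB : ∀ x, |F x| ≤ B) {c : ℝ}
    (hFc : ∀ x i y, |F x - F (Function.update x i y)| ≤ c) (z : Fin n → S) (i : Fin n) (y : S) :
    |∫ w, F (Fin.cons w z) ∂Q - ∫ w, F (Fin.cons w (Function.update z i y)) ∂Q| ≤ c := by
  have hint : ∀ z : Fin n → S, Integrable (fun w => F (Fin.cons w z)) Q := fun z =>
    Integrable.of_bound ((hF.comp measurable_fin_cons).comp
      (measurable_id.prodMk measurable_const)).aestronglyMeasurable B (ae_of_all _ fun w => hFB _)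
  rw [← integral_sub (hint z) (hint _)]
  simpa using norm_integral_le_of_norm_le_const (μ := Q)
    (f := fun w => F (Fin.cons w z) - F (Fin.cons w (Function.update z i y)))
    (ae_of_all _ fun w => by simpa [Fin.cons_update] using hFc (Fin.cons w z) i.succ y)

theorem mgf_sub_integral_pi_le_of_abs_sub_update_le {n : ℕ} (P : Fin n → Measure S)
    [∀ i, IsProbabilityMeasure (P i)] {F : (Fin n → S) → ℝ} (hF : Measurable F) {B : ℝ}
    (hFB : ∀ x, |F x| ≤ B) {c : ℝ} (hFc : ∀ x i y, |F x - F (Function.update x i y)| ≤ c)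
    (t : ℝ) :
    mgf (fun x => F x - ∫ x', F x' ∂Measure.pi P) (Measure.pi P) t ≤
      exp (n * c ^ 2 * t ^ 2 / 8) := by
  -- Conditionally on the other coordinates, the first one contributes a Hoeffding factor, and
  -- the conditional mean `g` again has bounded differences `c`.
  induction n with
  | zero =>
    have hF0 : ∀ x, F x - ∫ x', F x' ∂Measure.pi P = 0 := fun x => by
      simp [Subsingleton.elim _ x]
    simp [mgf, hF0]
  | succ n ih =>
    set ν := Measure.pi fun i : Fin n => P i.succ
    set m := ∫ x, F x ∂Measure.pi P
    let g : (Fin n → S) → ℝ := fun z => ∫ y, F (Fin.cons y z) ∂P 0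
    have hFcons : Measurable fun p : S × (Fin n → S) => F (Fin.cons p.1 p.2) :=
      hF.comp measurable_fin_cons
    have hg : Measurable g := hFcons.stronglyMeasurable.integral_prod_left'.measurable
    have hgB : ∀ z, |g z| ≤ B := fun z => by
      simpa using norm_integral_le_of_norm_le_const (μ := P 0)
        (f := fun y => F (Fin.cons y z)) (ae_of_all _ fun y => (hFB (Fin.cons y z)).trans_eq' rfl)
    have hm : m = ∫ z, g z ∂ν :=
      integral_pi_fin_succ P (Integrable.of_bound hF.aestronglyMeasurable B (ae_of_all _ hFB))
    calc mgf (fun x => F x - m) (Measure.pi P) t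
        = ∫ z, ∫ y, exp (t * (F (Fin.cons y z) - m)) ∂P 0 ∂ν :=
          integral_pi_fin_succ P (integrable_exp_mul_of_abs_le (hF.sub_const m).aemeasurable
            (fun x => (abs_sub _ _).trans (add_le_add_left (hFB x) _)) t)
      _ ≤ ∫ z, exp (t * (g z - m)) * exp (c ^ 2 * t ^ 2 / 8) ∂ν :=
          integral_mono_of_nonneg (ae_of_all _ fun z => integral_nonneg fun y => (exp_pos _).le)
            ((integrable_exp_mul_of_abs_le (hg.sub_const m).aemeasurable
              (fun z => (abs_sub _ _).trans (add_le_add_left (hgB z) _)) t).mul_const _)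
            (ae_of_all _ fun z => integral_exp_mul_sub_le_of_abs_sub_le
              (hFcons.comp (measurable_id.prodMk measurable_const))
              (fun y y' => by simpa using hFc (Fin.cons y z) 0 y') t m)
      _ = mgf (fun z => g z - ∫ z', g z' ∂ν) ν t * exp (c ^ 2 * t ^ 2 / 8) := by
          rw [integral_mul_const, mgf, hm]
      _ ≤ exp (n * c ^ 2 * t ^ 2 / 8) * exp (c ^ 2 * t ^ 2 / 8) := by
          gcongr
          exact ih _ hg hgB (abs_integral_fin_cons_sub_update_le hF hFB hFc)
      _ = exp ((n + 1 : ℕ) * c ^ 2 * t ^ 2 / 8) := by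
          rw [← exp_add]
          push_cast
          ring_nf

/-- **McDiarmid's bounded differences inequality**. -/
theorem one_sub_exp_le_measureReal_le_integral_add {n : ℕ} (P : Fin n → Measure S)
    [∀ i, IsProbabilityMeasure (P i)] {F : (Fin n → S) → ℝ} (hF : Measurable F) {B : ℝ}
    (hFB : ∀ x, |F x| ≤ B) {c : ℝ} (hFc : ∀ x i y, |F x - F (Function.update x i y)| ≤ c)
    {ε : ℝ} (hε : 0 ≤ ε) :
    1 - exp (-2 * ε ^ 2 / (n * c ^ 2)) ≤
      (Measure.pi P).real {x | F x ≤ ∫ x', F x' ∂Measure.pi P + ε} := by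
  set m := ∫ x', F x' ∂Measure.pi P
  have hsubG : HasSubgaussianMGF (fun x => F x - m) (n * c ^ 2 / 4).toNNReal (Measure.pi P) :=
    ⟨integrable_exp_mul_of_abs_le (hF.sub_const m).aemeasurable
        (fun x => (abs_sub _ _).trans (add_le_add_left (hFB x) _)),
      fun t => (mgf_sub_integral_pi_le_of_abs_sub_update_le P hF hFB hFc t).trans_eq (by
        rw [Real.coe_toNNReal _ (by positivity)]
        ring_nf)⟩
  have htail : (Measure.pi P).real {x | ε ≤ F x - m} ≤ exp (-2 * ε ^ 2 / (n * c ^ 2)) :=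
    (hsubG.measure_ge_le hε).trans_eq (by
      rw [Real.coe_toNNReal _ (by positivity)]
      ring_nf)
  calc 1 - exp (-2 * ε ^ 2 / (n * c ^ 2)) ≤ 1 - (Measure.pi P).real {x | ε ≤ F x - m} := by
        linarith
    _ = (Measure.pi P).real {x | ε ≤ F x - m}ᶜ :=
        (probReal_compl_eq_one_sub (measurableSet_le measurable_const (hF.sub_const m))).symm
    _ ≤ (Measure.pi P).real {x | F x ≤ m + ε} :=
        measureReal_mono fun x hx => by
          simp only [Set.mem_compl_iff, Set.mem_ofPred_eq, not_le] at hx ⊢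
          linarith

end McDiarmid

lemma abs_ciSup_sub_ciSup_le {ι : Type*} [Nonempty ι] {u v : ι → ℝ} (hu : BddAbove (Set.range u))
    (hv : BddAbove (Set.range v)) {δ : ℝ} (h : ∀ i, |u i - v i| ≤ δ) :
    |(⨆ i, u i) - ⨆ i, v i| ≤ δ := by
  rw [abs_sub_le_iff, sub_le_iff_le_add, sub_le_iff_le_add]
  exact ⟨ciSup_le fun i => by linarith [(abs_sub_le_iff.1 (h i)).1, le_ciSup hv i],
    ciSup_le fun i => by linarith [(abs_sub_le_iff.1 (h i)).2, le_ciSup hu i]⟩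

lemma ciSup_subtype_eq_of_forall_exists_le_add {ι : Type*} {u : ι → ℝ}
    (hu : BddAbove (Set.range u)) {s : Set ι} [Nonempty s]
    (h : ∀ i, ∀ ε > 0, ∃ j ∈ s, u i ≤ u j + ε) :
    ⨆ j : s, u j = ⨆ i, u i := by
  have : Nonempty ι := ⟨(Classical.arbitrary s).1⟩
  have hus : BddAbove (Set.range fun j : s => u j) :=
    hu.mono (Set.range_subset_iff.2 fun j => Set.mem_range_self (j : ι))
  refine le_antisymm (ciSup_le fun j => le_ciSup hu j) (ciSup_le fun i => ?_)
  refine le_of_forall_pos_le_add fun ε hε => ?_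
  obtain ⟨j, hj, hij⟩ := h i ε hε
  linarith [le_ciSup hus (⟨j, hj⟩ : s)]

section EmpiricalDeviation

variable {S : Type*} [MeasurableSpace S] {P : Measure S} {n : ℕ}

noncomputable def empiricalDeviation (P : Measure S) (g : S → ℝ) {n : ℕ} (x : Fin n → S) : ℝ :=
  |(1 / n : ℝ) * ∑ i, g (x i) - ∫ y, g y ∂P|

lemma empiricalDeviation_nonneg {g : S → ℝ} {x : Fin n → S} : 0 ≤ empiricalDeviation P g x :=
  abs_nonneg _

lemma empiricalDeviation_le [IsProbabilityMeasure P] (hn : 0 < n) {g : S → ℝ} (hg : Measurable g)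
    {a b : ℝ} (hgab : ∀ y, g y ∈ Set.Icc a b) (x : Fin n → S) :
    empiricalDeviation P g x ≤ b - a := by
  have hn' : (0 : ℝ) < n := Nat.cast_pos.2 hn
  have hsum_le : ∑ i, g (x i) ≤ n * b := by
    simpa using Finset.sum_le_card_nsmul Finset.univ _ b fun i _ => (hgab (x i)).2
  have hsum_ge : n * a ≤ ∑ i, g (x i) := by
    simpa using Finset.card_nsmul_le_sum Finset.univ _ a fun i _ => (hgab (x i)).1
  have hint : Integrable g P := Integrable.of_mem_Icc a b hg.aemeasurable (ae_of_all _ hgab)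
  have hint_le : ∫ y, g y ∂P ≤ b := by
    simpa using integral_mono hint (integrable_const b) fun y => (hgab y).2
  have hint_ge : a ≤ ∫ y, g y ∂P := by
    simpa using integral_mono (integrable_const a) hint fun y => (hgab y).1
  have hmean_le : (1 / n : ℝ) * ∑ i, g (x i) ≤ b := by
    rwa [one_div, inv_mul_le_iff₀ hn']
  have hmean_ge : a ≤ (1 / n : ℝ) * ∑ i, g (x i) := by
    rwa [one_div, le_inv_mul_iff₀ hn']
  rw [empiricalDeviation, abs_sub_le_iff]
  constructor <;> linarith

lemma abs_empiricalDeviation_sub_update_le {g : S → ℝ} {c : ℝ} (hgc : ∀ y y', |g y - g y'| ≤ c)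
    (x : Fin n → S) (i : Fin n) (y : S) :
    |empiricalDeviation P g x - empiricalDeviation P g (Function.update x i y)| ≤ c / n := by
  refine (abs_abs_sub_abs_le_abs_sub _ _).trans ?_
  have hsum : ∑ j, g (x j) - ∑ j, g (Function.update x i y j) = g (x i) - g y := by
    rw [← Finset.sum_sub_distrib, Finset.sum_eq_single i (fun j _ hj => by simp [hj]) (by simp)]
    simp
  calc |(1 / n : ℝ) * ∑ j, g (x j) - ∫ y, g y ∂P -
        ((1 / n : ℝ) * ∑ j, g (Function.update x i y j) - ∫ y, g y ∂P)|
      = (1 / n : ℝ) * |g (x i) - g y| := by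
        rw [← hsum, sub_sub_sub_cancel_right, ← mul_sub, abs_mul, abs_of_nonneg (by positivity)]
    _ ≤ c / n := by
        rw [one_div_mul_eq_div]
        gcongr
        exact hgc _ _

lemma abs_empiricalDeviation_sub_le [IsProbabilityMeasure P] (hn : 0 < n) {g g' : S → ℝ}
    (hg : Integrable g P) (hg' : Integrable g' P) {δ : ℝ} (h : ∀ y, |g y - g' y| ≤ δ)
    (x : Fin n → S) :
    |empiricalDeviation P g x - empiricalDeviation P g' x| ≤ 2 * δ := by
  have hn' : (0 : ℝ) < n := Nat.cast_pos.2 hn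
  have hmean : |(1 / n : ℝ) * ∑ i, (g (x i) - g' (x i))| ≤ δ := by
    rw [abs_mul, abs_of_pos (by positivity), one_div, inv_mul_le_iff₀ hn']
    simpa using (Finset.abs_sum_le_sum_abs _ _).trans
      (Finset.sum_le_card_nsmul Finset.univ _ δ fun i _ => h (x i))
  have hint : |∫ y, (g y - g' y) ∂P| ≤ δ := by
    simpa using norm_integral_le_of_norm_le_const (μ := P) (f := fun y => g y - g' y)
      (ae_of_all _ h)
  have hsplit : (1 / n : ℝ) * ∑ i, g (x i) - ∫ y, g y ∂P - ((1 / n : ℝ) * ∑ i, g' (x i) -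
      ∫ y, g' y ∂P) = (1 / n : ℝ) * ∑ i, (g (x i) - g' (x i)) - ∫ y, (g y - g' y) ∂P := by
    rw [integral_sub hg hg', Finset.sum_sub_distrib]
    ring
  calc |empiricalDeviation P g x - empiricalDeviation P g' x|
      ≤ |(1 / n : ℝ) * ∑ i, (g (x i) - g' (x i)) - ∫ y, (g y - g' y) ∂P| :=
        (abs_abs_sub_abs_le_abs_sub _ _).trans_eq (congrArg _ hsplit)
    _ ≤ δ + δ := (abs_sub _ _).trans (add_le_add hmean hint)
    _ = 2 * δ := by ring

lemma measurable_empiricalDeviation {g : S → ℝ} (hg : Measurable g) :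
    Measurable (empiricalDeviation P g : (Fin n → S) → ℝ) :=
  (((Finset.measurable_sum _ fun i _ => hg.comp (measurable_pi_apply i)).const_mul _).sub_const
    _).abs

variable [IsProbabilityMeasure P] {ι : Type*} {g : ι → S → ℝ} {a b : ℝ}

lemma bddAbove_range_empiricalDeviation (hn : 0 < n) (hg : ∀ i, Measurable (g i))
    (hgab : ∀ i y, g i y ∈ Set.Icc a b) (x : Fin n → S) :
    BddAbove (Set.range fun i => empiricalDeviation P (g i) x) :=
  ⟨b - a, by rintro _ ⟨i, rfl⟩; exact empiricalDeviation_le hn (hg i) (hgab i) x⟩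

lemma abs_iSup_empiricalDeviation_le [Nonempty ι] (hn : 0 < n) (hg : ∀ i, Measurable (g i))
    (hgab : ∀ i y, g i y ∈ Set.Icc a b) (x : Fin n → S) :
    |⨆ i, empiricalDeviation P (g i) x| ≤ b - a := by
  rw [abs_of_nonneg (Real.iSup_nonneg fun i => empiricalDeviation_nonneg)]
  exact ciSup_le fun i => empiricalDeviation_le hn (hg i) (hgab i) x

lemma abs_iSup_empiricalDeviation_sub_update_le [Nonempty ι] (hn : 0 < n)
    (hg : ∀ i, Measurable (g i)) (hgab : ∀ i y, g i y ∈ Set.Icc a b) (x : Fin n → S) (j : Fin n)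
    (y : S) :
    |(⨆ i, empiricalDeviation P (g i) x) -
      ⨆ i, empiricalDeviation P (g i) (Function.update x j y)| ≤ (b - a) / n :=
  abs_ciSup_sub_ciSup_le (bddAbove_range_empiricalDeviation hn hg hgab _)
    (bddAbove_range_empiricalDeviation hn hg hgab _) fun i =>
      abs_empiricalDeviation_sub_update_le
        (fun y y' => abs_sub_le_of_le_of_le (hgab i y).1 (hgab i y).2 (hgab i y').1 (hgab i y').2)
        x j y

lemma measurable_iSup_empiricalDeviation [Nonempty ι] (hn : 0 < n) (hg : ∀ i, Measurable (g i))
    (hgab : ∀ i y, g i y ∈ Set.Icc a b) {s : Set ι} (hs : s.Countable)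
    (hdense : ∀ i, ∀ ε > 0, ∃ j ∈ s, ∀ y, |g i y - g j y| ≤ ε) :
    Measurable fun x : Fin n → S => ⨆ i, empiricalDeviation P (g i) x := by
  have : Countable s := hs.to_subtype
  obtain ⟨j₀, hj₀, -⟩ := hdense (Classical.arbitrary ι) 1 one_pos
  have : Nonempty s := ⟨⟨j₀, hj₀⟩⟩
  have hsup : ∀ x : Fin n → S,
      ⨆ j : s, empiricalDeviation P (g j) x = ⨆ i, empiricalDeviation P (g i) x := fun x =>
    ciSup_subtype_eq_of_forall_exists_le_add (bddAbove_range_empiricalDeviation hn hg hgab x)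
      fun i ε hε => by
        obtain ⟨j, hj, hij⟩ := hdense i (ε / 2) (half_pos hε)
        have hint : ∀ k, Integrable (g k) P := fun k =>
          Integrable.of_mem_Icc a b (hg k).aemeasurable (ae_of_all _ (hgab k))
        refine ⟨j, hj, ?_⟩
        linarith [(abs_le.1 (abs_empiricalDeviation_sub_le hn (hint i) (hint j) hij x)).2]
  rw [← funext hsup]
  exact Measurable.iSup fun j : s => measurable_empiricalDeviation (P := P) (hg j)

end EmpiricalDeviation

lemma abs_sq_sub_sq_le {u v D : ℝ} (hu : |u| ≤ D) (hv : |v| ≤ D) :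
    |u ^ 2 - v ^ 2| ≤ 2 * D * |u - v| := by
  rw [sq_sub_sq, abs_mul]
  gcongr
  linarith [abs_add_le u v]

lemma exists_countable_uniformly_dense_sq {S : Type*} {A : Set (S → ℝ)} {D : ℝ} (hD : 0 < D)
    (hAbdd : ∀ f ∈ A, ∀ x, |f x| ≤ D)
    (hsep : ∃ A₀ : Set (S → ℝ), A₀.Countable ∧ A₀ ⊆ A ∧
      ∀ f ∈ A, ∀ ε : ℝ, 0 < ε → ∃ f₀ ∈ A₀, ∀ x, |f x - f₀ x| ≤ ε) :
    ∃ s : Set A, s.Countable ∧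
      ∀ f : A, ∀ ε > 0, ∃ f₀ ∈ s, ∀ y, |(f : S → ℝ) y ^ 2 - (f₀ : S → ℝ) y ^ 2| ≤ ε := by
  obtain ⟨A₀, hA₀c, hA₀A, hA₀dense⟩ := hsep
  refine ⟨Subtype.val ⁻¹' A₀, hA₀c.preimage Subtype.val_injective, fun f ε hε => ?_⟩
  obtain ⟨f₀, hf₀, hff₀⟩ := hA₀dense f f.2 (ε / (2 * D)) (by positivity)
  refine ⟨⟨f₀, hA₀A hf₀⟩, hf₀, fun y => ?_⟩
  calc |(f : S → ℝ) y ^ 2 - f₀ y ^ 2| ≤ 2 * D * |(f : S → ℝ) y - f₀ y| :=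
        abs_sq_sub_sq_le (hAbdd f f.2 y) (hAbdd f₀ (hA₀A hf₀) y)
    _ ≤ 2 * D * (ε / (2 * D)) := by gcongr; exact hff₀ y
    _ = ε := by field_simp

lemma exp_neg_two_mul_sq_div_le_exp_neg {n : ℕ} (hn : 0 < n) {D t R : ℝ} (hD : 0 < D)
    (ht : 0 ≤ t) (hR : √(2 * D ^ 4 * t / n) ≤ R) :
    exp (-2 * R ^ 2 / (n * (D ^ 2 / n) ^ 2)) ≤ exp (-t) := by
  have hR2 : 2 * D ^ 4 * t / n ≤ R ^ 2 := by
    have h := pow_le_pow_left₀ (Real.sqrt_nonneg _) hR 2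
    rwa [Real.sq_sqrt (by positivity)] at h
  have hvar : (n : ℝ) * (D ^ 2 / n) ^ 2 = D ^ 4 / n := by field_simp
  rw [exp_le_exp, hvar, neg_mul, neg_div, neg_le_neg_iff, le_div_iff₀ (by positivity)]
  linarith [sq_nonneg R, show t * (D ^ 4 / n) = 2 * D ^ 4 * t / n / 2 by ring]

theorem talagrand_sup_bound
    {Ω : Type*} [MeasurableSpace Ω] (μ : Measure Ω) [IsProbabilityMeasure μ]
    {S : Type*} [MeasurableSpace S] (P : Measure S) [IsProbabilityMeasure P]
    (n : ℕ) (hn : 0 < n)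
    (X : Fin n → Ω → S) (hXm : ∀ i, Measurable (X i))
    (hiid : iIndepFun X μ)
    (hPX : ∀ i, Measure.map (X i) μ = P)
    (D : ℝ) (hD : 0 < D)
    (A : Set (S → ℝ)) (hAne : A.Nonempty)
    (hAmeas : ∀ f ∈ A, Measurable f)
    (hAbdd : ∀ f ∈ A, ∀ x, |f x| ≤ D)
    (hsep : ∃ A₀ : Set (S → ℝ), A₀.Countable ∧ A₀ ⊆ A ∧
      ∀ f ∈ A, ∀ ε : ℝ, 0 < ε → ∃ f₀ ∈ A₀, ∀ x, |f x - f₀ x| ≤ ε)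
    (t : ℝ) (ht : 0 < t) :
    1 - Real.exp (-t) ≤
      (μ {ω | (⨆ f : A, |(1 / n : ℝ) * ∑ i, ((f : S → ℝ) (X i ω))^2 - ∫ x, ((f : S → ℝ) x)^2 ∂P|) ≤
        (∫ ω', (⨆ f : A, |(1 / n : ℝ) * ∑ i, ((f : S → ℝ) (X i ω'))^2 - ∫ x, ((f : S → ℝ) x)^2 ∂P|) ∂μ) +
        Real.sqrt (2 * D^4 * t / n +
          4 * D^2 * (∫ ω', (⨆ f : A, |(1 / n : ℝ) * ∑ i, ((f : S → ℝ) (X i ω'))^2 - ∫ x, ((f : S → ℝ) x)^2 ∂P|) ∂μ) * t / n) +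
        2 * D^2 * t / (3 * n)}).toReal := by
  have : Nonempty A := hAne.to_subtype
  obtain ⟨s, hs, hdense⟩ := exists_countable_uniformly_dense_sq hD hAbdd hsep
  set g : A → S → ℝ := fun f y => (f : S → ℝ) y ^ 2
  have hg : ∀ f, Measurable (g f) := fun f => (hAmeas f f.2).pow_const 2
  have hgD : ∀ f y, g f y ∈ Set.Icc 0 (D ^ 2) := fun f y =>
    ⟨sq_nonneg _, sq_le_sq' (abs_le.1 (hAbdd f f.2 y)).1 (abs_le.1 (hAbdd f f.2 y)).2⟩
  set Z : (Fin n → S) → ℝ := fun x => ⨆ f : A, empiricalDeviation P (g f) x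
  have hZm : Measurable Z := measurable_iSup_empiricalDeviation hn hg hgD hs hdense
  have hXmeas : Measurable fun ω i => X i ω := measurable_pi_lambda _ hXm
  have hlaw : μ.map (fun ω i => X i ω) = Measure.pi fun _ => P := by
    simpa [hPX] using hiid.map_fun_eq_pi_map fun i => (hXm i).aemeasurable
  set m := ∫ ω', Z (fun i => X i ω') ∂μ
  set R := √(2 * D ^ 4 * t / n + 4 * D ^ 2 * m * t / n) + 2 * D ^ 2 * t / (3 * n)
  have hR : √(2 * D ^ 4 * t / n) ≤ R := by
    have hm : 0 ≤ m := integral_nonneg fun ω => Real.iSup_nonneg fun f => empiricalDeviation_nonneg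
    have : √(2 * D ^ 4 * t / n) ≤ √(2 * D ^ 4 * t / n + 4 * D ^ 2 * m * t / n) :=
      Real.sqrt_le_sqrt (le_add_of_nonneg_right (by positivity))
    linarith [show 0 ≤ 2 * D ^ 2 * t / (3 * n) by positivity]
  have hmc := one_sub_exp_le_measureReal_le_integral_add (fun _ => P) hZm
    (abs_iSup_empiricalDeviation_le hn hg hgD) (abs_iSup_empiricalDeviation_sub_update_le hn hg hgD)
    (hR.trans' (Real.sqrt_nonneg _))
  rw [← hlaw, integral_map hXmeas.aemeasurable hZm.aestronglyMeasurable,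
    map_measureReal_apply hXmeas (measurableSet_le hZm measurable_const), sub_zero] at hmc
  calc 1 - exp (-t) ≤ 1 - exp (-2 * R ^ 2 / (n * (D ^ 2 / n) ^ 2)) := by
        linarith [exp_neg_two_mul_sq_div_le_exp_neg hn hD ht.le hR]
    _ ≤ _ := hmc
    _ = _ := by simp only [add_assoc]; rfl
end
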